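/- Let 0 ≤ λ_i ≤ 1 with λ_1 + λ_2 < 1 and λ_2 + λ_3 < 1, and let the 3-queue path-graph system evolve under the Top-Down priority policy π_TD defined by: S(t) = (1,0,1) if Q_1(t) > 0; otherwise S(t) = (0,1,0) if Q_2(t) > 0; otherwise S(t) = (1,0,1). Then limsup_{T→∞} (1/T) ∑_{t=0}^{T−1} ∑_{i=1}^{3} E[Q_i(t)] < ∞, i.e., π_TD is throughput-optimal (and by the symmetric argument the Bottom-Up policy π_BU, which exchanges the roles of queues 1 and 3, is throughput-optimal as well). -/

import Mathlib

/-!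
Under π_TD queue 1 is served whenever it is nonempty, so it only ever holds the packet that arrived
in the previous slot. Queue 2 is served exactly when that packet is absent, and the pair
`(Q₂(t), Q₃(t))` depends only on arrivals other than queue 1's arrival in slot `t - 1` and the
arrivals of slot `t`, hence is independent of them. This gives two quadratic drift bounds,
`E[Q₂(t+1)²] ≤ E[Q₂(t)²] + 2 - 2 (1 - λ₁ - λ₂) E[Q₂(t)]` and, for `Z = Q₂ + Q₃`, which fails to
decrease only when queue 1 blocks queue 2 while queue 3 is empty,
`E[Z(t+1)²] ≤ E[Z(t)²] + 4 + 2 λ₁ E[Q₂(t)] - 2 (1 - λ₂ - λ₃) E[Z(t)]`.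
A weighted sum of the two has drift at most `C - c E[Z(t)]` with `c > 0`; telescoping bounds the
time average of `E[Z]`, hence of the total backlog. π_BU is π_TD with the queues reversed.
Queues 1, 2, 3 are the indices `0, 1, 2`.
-/

open MeasureTheory ProbabilityTheory Filter
open scoped ENNReal

/-- The Top-Down priority policy π_TD for the 3-queue path graph:
serve queues 1 and 3 if queue 1 is nonempty; else serve queue 2 if nonempty;
else serve queues 1 and 3. -/
def piTD (q : Fin 3 → ℕ) : Fin 3 → ℕ :=
  if 0 < q 0 then ![1, 0, 1]
  else if 0 < q 1 then ![0, 1, 0]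
  else ![1, 0, 1]

/-- The Bottom-Up priority policy π_BU, exchanging the roles of queues 1 and 3. -/
def piBU (q : Fin 3 → ℕ) : Fin 3 → ℕ :=
  if 0 < q 2 then ![1, 0, 1]
  else if 0 < q 1 then ![0, 1, 0]
  else ![1, 0, 1]

open Finset

section General

variable {Ω : Type*} [MeasurableSpace Ω] {μ : Measure Ω}

theorem ProbabilityTheory.iIndepFun.indepFun_of_measurable_biSup {ι β γ : Type*}
    [mβ : MeasurableSpace β] [MeasurableSpace γ] {f : ι → Ω → β} (hf : iIndepFun f μ)
    (hmeas : ∀ i, Measurable (f i)) {S : Set ι} {j : ι} (hj : j ∉ S) {X : Ω → γ}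
    (hX : Measurable[⨆ i ∈ S, mβ.comap (f i)] X) : IndepFun X (f j) μ := by
  have h := indep_iSup_of_disjoint (fun i => (hmeas i).comap_le) hf.iIndep
    (Set.disjoint_singleton_right.2 hj)
  rw [IndepFun_iff_Indep]
  exact indep_of_indep_of_le h hX.comap_le
    (le_iSup₂ (f := fun i (_ : i ∈ ({j} : Set ι)) => mβ.comap (f i)) j rfl)

theorem integrable_comp_of_forall_mem [IsFiniteMeasure μ] {α : Type*} [MeasurableSpace α]
    [Countable α] [MeasurableSingletonClass α] {W : Ω → α} (hW : Measurable W) {s : Finset α}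
    (hs : ∀ ω, W ω ∈ s) (φ : α → ℝ) : Integrable (fun ω => φ (W ω)) μ :=
  .of_bound ((measurable_of_countable φ).comp hW).aestronglyMeasurable (∑ a ∈ s, ‖φ a‖)
    (ae_of_all _ fun ω => single_le_sum (f := fun a => ‖φ a‖) (fun _ _ => norm_nonneg _) (hs ω))

theorem integral_natCast_of_le_one {X : Ω → ℕ} (hX : Measurable X) (h : ∀ ω, X ω ≤ 1) :
    ∫ ω, (X ω : ℝ) ∂μ = μ.real {ω | X ω = 1} := by
  have : (fun ω => (X ω : ℝ)) = {ω | X ω = 1}.indicator 1 := by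
    ext ω
    rcases Nat.le_one_iff_eq_zero_or_eq_one.1 (h ω) with h | h <;> simp [h]
  rw [this]
  exact integral_indicator_one (hX (measurableSet_singleton 1))

theorem lintegral_natCast_eq_ofReal_integral {X : Ω → ℕ}
    (hX : Integrable (fun ω => (X ω : ℝ)) μ) :
    ∫⁻ ω, (X ω : ℝ≥0∞) ∂μ = ENNReal.ofReal (∫ ω, (X ω : ℝ) ∂μ) := by
  simp [ofReal_integral_eq_lintegral_ofReal hX (ae_of_all _ fun _ => Nat.cast_nonneg _)]

theorem limsup_div_natCast_lt_top {s : ℕ → ℝ≥0∞} {C : ℝ≥0∞} (hC : C ≠ ⊤)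
    (h : ∀ T : ℕ, s T ≤ C * T) : limsup (fun T : ℕ => s T / T) atTop < ⊤ :=
  (limsup_le_of_le (by isBoundedDefault)
    (Eventually.of_forall fun T => ENNReal.div_le_of_le_mul (h T))).trans_lt hC.lt_top

theorem sum_range_le_of_drift {V x : ℕ → ℝ} {C : ℝ} (h : ∀ t, V (t + 1) + x t ≤ V t + C)
    (T : ℕ) : ∑ t ∈ range T, x t ≤ V 0 - V T + C * T := by
  calc ∑ t ∈ range T, x t ≤ ∑ t ∈ range T, (V t - V (t + 1) + C) :=
        sum_le_sum fun t _ => by linarith [h t]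
    _ = V 0 - V T + C * T := by
        rw [sum_add_distrib, sum_range_sub', sum_const, card_range, nsmul_eq_mul, mul_comm]

end General

section Arrivals

variable {Ω ι : Type*}

abbrev arrivalsSigma (A : ι → ℕ → Ω → ℕ) (S : Set (ι × ℕ)) : MeasurableSpace Ω :=
  ⨆ p ∈ S, MeasurableSpace.comap (A p.1 p.2) inferInstance

theorem measurable_arrivalsSigma {A : ι → ℕ → Ω → ℕ} {S : Set (ι × ℕ)} {p : ι × ℕ}
    (hp : p ∈ S) : Measurable[arrivalsSigma A S] (A p.1 p.2) :=
  measurable_iff_comap_le.2 <|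
    le_iSup₂ (f := fun p (_ : p ∈ S) => MeasurableSpace.comap (A p.1 p.2) inferInstance) p hp

theorem arrivalsSigma_mono (A : ι → ℕ → Ω → ℕ) {S T : Set (ι × ℕ)} (h : S ⊆ T) :
    arrivalsSigma A S ≤ arrivalsSigma A T :=
  biSup_mono h

variable [MeasurableSpace Ω]

theorem arrivalsSigma_le {A : ι → ℕ → Ω → ℕ} (hA : ∀ i t, Measurable (A i t))
    (S : Set (ι × ℕ)) : arrivalsSigma A S ≤ ‹MeasurableSpace Ω› :=
  iSup₂_le fun p _ => (hA p.1 p.2).comap_le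

structure IsBernoulliArrivals (μ : Measure Ω) (lam : ι → ℝ) (A : ι → ℕ → Ω → ℕ) : Prop where
  nonneg : ∀ i, 0 ≤ lam i
  measurable : ∀ i t, Measurable (A i t)
  le_one : ∀ i t ω, A i t ω ≤ 1
  measure_eq_one : ∀ i t, μ {ω | A i t ω = 1} = ENNReal.ofReal (lam i)
  indep : iIndepFun (fun p : ι × ℕ => A p.1 p.2) μ

namespace IsBernoulliArrivals

variable {μ : Measure Ω} {lam : ι → ℝ} {A : ι → ℕ → Ω → ℕ}

theorem comp {ι' : Type*} (hA : IsBernoulliArrivals μ lam A) {e : ι' → ι}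
    (he : Function.Injective e) :
    IsBernoulliArrivals μ (fun i => lam (e i)) (fun i => A (e i)) where
  nonneg i := hA.nonneg (e i)
  measurable i := hA.measurable (e i)
  le_one i := hA.le_one (e i)
  measure_eq_one i := hA.measure_eq_one (e i)
  indep := hA.indep.precomp (g := Prod.map e id) (he.prodMap Function.injective_id)

theorem integral_eq (hA : IsBernoulliArrivals μ lam A) (i : ι) (t : ℕ) :
    ∫ ω, (A i t ω : ℝ) ∂μ = lam i := by
  rw [integral_natCast_of_le_one (hA.measurable i t) (hA.le_one i t), measureReal_def,
    hA.measure_eq_one, ENNReal.toReal_ofReal (hA.nonneg i)]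

theorem integral_mul_eq (hA : IsBernoulliArrivals μ lam A) {S : Set (ι × ℕ)} {p : ι × ℕ}
    (hp : p ∉ S) {X : Ω → ℝ} (hX : Measurable[arrivalsSigma A S] X) :
    ∫ ω, X ω * A p.1 p.2 ω ∂μ = (∫ ω, X ω ∂μ) * lam p.1 := by
  have hind : IndepFun X (fun ω => (A p.1 p.2 ω : ℝ)) μ :=
    (hA.indep.indepFun_of_measurable_biSup (fun q => hA.measurable q.1 q.2) hp hX).comp
      measurable_id (measurable_of_countable (fun n : ℕ => (n : ℝ)))
  rw [hind.integral_fun_mul_eq_mul_integral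
    (hX.mono (arrivalsSigma_le hA.measurable S) le_rfl).aestronglyMeasurable
    ((measurable_of_countable _).comp (hA.measurable p.1 p.2)).aestronglyMeasurable]
  exact congrArg _ (hA.integral_eq p.1 p.2)

end IsBernoulliArrivals

end Arrivals

section TopDown

def tdStep (q a : Fin 3 → ℕ) (i : Fin 3) : ℕ := q i - piTD q i + a i

theorem tdStep_zero {q : Fin 3 → ℕ} (hq : q 0 ≤ 1) (a : Fin 3 → ℕ) : tdStep q a 0 = a 0 := by
  unfold tdStep piTD; split_ifs <;> simp <;> omega

theorem tdStep_le (q a : Fin 3 → ℕ) (i : Fin 3) : tdStep q a i ≤ q i + a i := by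
  unfold tdStep; omega

theorem sq_tdStep_one_le {q a : Fin 3 → ℕ} (hq : q 0 ≤ 1) (ha : a 1 ≤ 1) :
    (tdStep q a 1 : ℝ) ^ 2 + 2 * q 1 ≤ (q 1 : ℝ) ^ 2 + 2 + 2 * (q 1 * a 1) + 2 * (q 1 * q 0) := by
  have key : tdStep q a 1 ^ 2 + 2 * q 1 ≤ q 1 ^ 2 + 2 + 2 * (q 1 * a 1) + 2 * (q 1 * q 0) := by
    unfold tdStep piTD
    generalize q 1 = x
    interval_cases q 0 <;> interval_cases a 1 <;> rcases x with _ | x <;> simp <;> nlinarith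
  exact_mod_cast key

theorem sq_tdStep_one_add_two_le {q a : Fin 3 → ℕ} (hq : q 0 ≤ 1) (ha₁ : a 1 ≤ 1)
    (ha₂ : a 2 ≤ 1) :
    ((tdStep q a 1 : ℝ) + tdStep q a 2) ^ 2 + 2 * (q 1 + q 2) ≤
      ((q 1 : ℝ) + q 2) ^ 2 + 4 + 2 * ((q 1 + q 2) * a 1) + 2 * ((q 1 + q 2) * a 2)
        + 2 * (q 1 * q 0) := by
  have key : (tdStep q a 1 + tdStep q a 2) ^ 2 + 2 * (q 1 + q 2) ≤
      (q 1 + q 2) ^ 2 + 4 + 2 * ((q 1 + q 2) * a 1) + 2 * ((q 1 + q 2) * a 2)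
        + 2 * (q 1 * q 0) := by
    unfold tdStep piTD
    generalize q 1 = x; generalize q 2 = y
    interval_cases q 0 <;> interval_cases a 1 <;> interval_cases a 2 <;>
      rcases x with _ | x <;> rcases y with _ | y <;> simp <;> nlinarith
  exact_mod_cast key

variable {Ω : Type*} {A : Fin 3 → ℕ → Ω → ℕ} {Q : ℕ → Fin 3 → Ω → ℕ}

structure IsTopDownRun (A : Fin 3 → ℕ → Ω → ℕ) (Q : ℕ → Fin 3 → Ω → ℕ) : Prop where
  init : ∀ i ω, Q 0 i ω = 0
  step : ∀ t i ω, Q (t + 1) i ω = tdStep (fun j => Q t j ω) (fun j => A j t ω) i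

/-- The arrivals that queues 2 and 3 have seen by time `t`: all arrivals before slot `t`,
except the arrival at queue 1 in slot `t - 1`, which is still waiting in queue 1. -/
def tdPast (t : ℕ) : Set (Fin 3 × ℕ) := {p | p.2 < t ∧ (p.1 = 0 → p.2 + 1 < t)}

/-- Scaling the second term by `1 - λ₁ - λ₂` turns its blocking penalty `2 λ₁ E[Q₂]` into one that
the drift `-2 (1 - λ₁ - λ₂) E[Q₂]` of the first term absorbs. -/
noncomputable def tdLyapunov {Ω : Type*} [MeasurableSpace Ω] (μ : Measure Ω) (lam : Fin 3 → ℝ)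
    (Q : ℕ → Fin 3 → Ω → ℕ) (t : ℕ) : ℝ :=
  ∫ ω, (Q t 1 ω : ℝ) ^ 2 ∂μ + (1 - lam 0 - lam 1) * ∫ ω, ((Q t 1 ω : ℝ) + Q t 2 ω) ^ 2 ∂μ

namespace IsTopDownRun

theorem queue_zero_le_one (hQ : IsTopDownRun A Q) (hA : ∀ i t ω, A i t ω ≤ 1) :
    ∀ t ω, Q t 0 ω ≤ 1
  | 0, ω => by simp [hQ.init]
  | t + 1, ω => by
    rw [hQ.step, tdStep_zero (hQ.queue_zero_le_one hA t ω)]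
    exact hA 0 t ω

theorem queue_zero_succ (hQ : IsTopDownRun A Q) (hA : ∀ i t ω, A i t ω ≤ 1) (t : ℕ) (ω : Ω) :
    Q (t + 1) 0 ω = A 0 t ω := by
  rw [hQ.step, tdStep_zero (hQ.queue_zero_le_one hA t ω)]

theorem le_time (hQ : IsTopDownRun A Q) (hA : ∀ i t ω, A i t ω ≤ 1) : ∀ t i ω, Q t i ω ≤ t
  | 0, i, ω => by simp [hQ.init]
  | t + 1, i, ω => by
    rw [hQ.step]
    exact (tdStep_le _ _ i).trans (add_le_add (hQ.le_time hA t i ω) (hA i t ω))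

theorem measurable_succ {m : MeasurableSpace Ω} (hQ : IsTopDownRun A Q) {t : ℕ} {i : Fin 3}
    (hQt : ∀ j, Measurable[m] (Q t j)) (hA : Measurable[m] (A i t)) :
    Measurable[m] (Q (t + 1) i) := by
  rw [funext (hQ.step t i)]
  exact (measurable_of_countable fun x : (Fin 3 → ℕ) × ℕ => x.1 i - piTD x.1 i + x.2).comp
    ((measurable_pi_lambda _ hQt).prodMk hA)

theorem measurable_tdPast (hQ : IsTopDownRun A Q) (hA : ∀ i t ω, A i t ω ≤ 1) :
    ∀ t, Measurable[arrivalsSigma A (tdPast t)] (Q t 1) ∧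
      Measurable[arrivalsSigma A (tdPast t)] (Q t 2)
  | 0 => by rw [funext (hQ.init 1), funext (hQ.init 2)]; exact ⟨measurable_const, measurable_const⟩
  | t + 1 => by
    obtain ⟨h₁, h₂⟩ := hQ.measurable_tdPast hA t
    have hmono := arrivalsSigma_mono A (S := tdPast t) (T := tdPast (t + 1))
      fun p hp => ⟨by have := hp.1; omega, fun h => by have := hp.2 h; omega⟩
    have h₀ : Measurable[arrivalsSigma A (tdPast (t + 1))] (Q t 0) := by
      rcases t with _ | s
      · rw [funext (hQ.init 0)]; exact measurable_const
      · rw [funext (hQ.queue_zero_succ hA s)]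
        exact measurable_arrivalsSigma (p := (0, s)) ⟨by omega, fun _ => by omega⟩
    have hvec : ∀ j, Measurable[arrivalsSigma A (tdPast (t + 1))] (Q t j) := by
      intro j
      fin_cases j
      exacts [h₀, h₁.mono hmono le_rfl, h₂.mono hmono le_rfl]
    exact ⟨hQ.measurable_succ hvec (measurable_arrivalsSigma (p := (1, t)) ⟨by omega, by simp⟩),
      hQ.measurable_succ hvec (measurable_arrivalsSigma (p := (2, t)) ⟨by omega, by simp⟩)⟩

variable [MeasurableSpace Ω]

theorem measurable (hQ : IsTopDownRun A Q) (hA : ∀ i t, Measurable (A i t)) :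
    ∀ t i, Measurable (Q t i)
  | 0, i => by rw [funext (hQ.init i)]; exact measurable_const
  | t + 1, i => hQ.measurable_succ (hQ.measurable hA t) (hA i t)

variable {μ : Measure Ω} {lam : Fin 3 → ℝ}

theorem integral_mul_queue_zero_le (hA : IsBernoulliArrivals μ lam A) (hQ : IsTopDownRun A Q)
    (t : ℕ) : ∫ ω, (Q t 1 ω : ℝ) * Q t 0 ω ∂μ ≤ lam 0 * ∫ ω, (Q t 1 ω : ℝ) ∂μ := by
  rcases t with _ | s
  · simp [hQ.init]
  · simp_rw [hQ.queue_zero_succ hA.le_one s]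
    rw [hA.integral_mul_eq (p := (0, s)) (S := tdPast (s + 1)) (by simp [tdPast])
      (by have := (hQ.measurable_tdPast hA.le_one (s + 1)).1; fun_prop), mul_comm]

variable [IsProbabilityMeasure μ]

theorem integrable_comp (hA : IsBernoulliArrivals μ lam A) (hQ : IsTopDownRun A Q) (t : ℕ)
    (φ : (Fin 3 → ℕ) × (Fin 3 → ℕ) → ℝ) :
    Integrable (fun ω => φ ((fun j => Q t j ω), fun j => A j t ω)) μ :=
  integrable_comp_of_forall_mem
    ((measurable_pi_lambda _ (hQ.measurable hA.measurable t)).prodMk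
      (measurable_pi_lambda _ fun j => hA.measurable j t))
    (s := Fintype.piFinset (fun _ => range (t + 1)) ×ˢ Fintype.piFinset (fun _ => range 2))
    (fun ω => mem_product.2
      ⟨Fintype.mem_piFinset.2 fun j => mem_range.2 (Nat.lt_succ_of_le (hQ.le_time hA.le_one t j ω)),
        Fintype.mem_piFinset.2 fun j => mem_range.2 (Nat.lt_succ_of_le (hA.le_one j t ω))⟩) φ

theorem integral_drift_one (hA : IsBernoulliArrivals μ lam A) (hQ : IsTopDownRun A Q) (t : ℕ) :
    ∫ ω, (Q (t + 1) 1 ω : ℝ) ^ 2 ∂μ + 2 * (1 - lam 0 - lam 1) * ∫ ω, (Q t 1 ω : ℝ) ∂μ ≤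
      ∫ ω, (Q t 1 ω : ℝ) ^ 2 ∂μ + 2 := by
  have : Integrable (fun ω => (Q (t + 1) 1 ω : ℝ) ^ 2) μ :=
    hQ.integrable_comp hA (t + 1) fun x => (x.1 1 : ℝ) ^ 2
  have : Integrable (fun ω => (Q t 1 ω : ℝ)) μ := hQ.integrable_comp hA t fun x => x.1 1
  have : Integrable (fun ω => (Q t 1 ω : ℝ) ^ 2) μ :=
    hQ.integrable_comp hA t fun x => (x.1 1 : ℝ) ^ 2
  have : Integrable (fun ω => (Q t 1 ω : ℝ) * A 1 t ω) μ :=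
    hQ.integrable_comp hA t fun x => (x.1 1 : ℝ) * x.2 1
  have : Integrable (fun ω => (Q t 1 ω : ℝ) * Q t 0 ω) μ :=
    hQ.integrable_comp hA t fun x => (x.1 1 : ℝ) * x.1 0
  have hmono : ∫ ω, ((Q (t + 1) 1 ω : ℝ) ^ 2 + 2 * Q t 1 ω) ∂μ ≤
      ∫ ω, ((Q t 1 ω : ℝ) ^ 2 + 2 + 2 * (Q t 1 ω * A 1 t ω) + 2 * (Q t 1 ω * Q t 0 ω)) ∂μ :=
    integral_mono (by fun_prop) (by fun_prop) fun ω => by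
      rw [hQ.step t 1 ω]
      exact sq_tdStep_one_le (hQ.queue_zero_le_one hA.le_one t ω) (hA.le_one 1 t ω)
  rw [integral_add (by fun_prop) (by fun_prop), integral_add (by fun_prop) (by fun_prop),
    integral_add (by fun_prop) (by fun_prop), integral_add (by fun_prop) (by fun_prop),
    integral_const_mul, integral_const_mul, integral_const_mul, integral_const, probReal_univ,
    one_smul] at hmono
  have harr : ∫ ω, (Q t 1 ω : ℝ) * A 1 t ω ∂μ = (∫ ω, (Q t 1 ω : ℝ) ∂μ) * lam 1 :=
    hA.integral_mul_eq (p := (1, t)) (S := tdPast t) (by simp [tdPast])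
      (by have := (hQ.measurable_tdPast hA.le_one t).1; fun_prop)
  linarith [hQ.integral_mul_queue_zero_le hA t]

theorem integral_drift_one_add_two (hA : IsBernoulliArrivals μ lam A) (hQ : IsTopDownRun A Q)
    (t : ℕ) :
    ∫ ω, ((Q (t + 1) 1 ω : ℝ) + Q (t + 1) 2 ω) ^ 2 ∂μ +
        2 * (1 - lam 1 - lam 2) * ∫ ω, ((Q t 1 ω : ℝ) + Q t 2 ω) ∂μ ≤
      ∫ ω, ((Q t 1 ω : ℝ) + Q t 2 ω) ^ 2 ∂μ + 4 + 2 * lam 0 * ∫ ω, (Q t 1 ω : ℝ) ∂μ := by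
  have : Integrable (fun ω => ((Q (t + 1) 1 ω : ℝ) + Q (t + 1) 2 ω) ^ 2) μ :=
    hQ.integrable_comp hA (t + 1) fun x => ((x.1 1 : ℝ) + x.1 2) ^ 2
  have : Integrable (fun ω => (Q t 1 ω : ℝ) + Q t 2 ω) μ :=
    hQ.integrable_comp hA t fun x => (x.1 1 : ℝ) + x.1 2
  have : Integrable (fun ω => ((Q t 1 ω : ℝ) + Q t 2 ω) ^ 2) μ :=
    hQ.integrable_comp hA t fun x => ((x.1 1 : ℝ) + x.1 2) ^ 2
  have : Integrable (fun ω => ((Q t 1 ω : ℝ) + Q t 2 ω) * A 1 t ω) μ :=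
    hQ.integrable_comp hA t fun x => ((x.1 1 : ℝ) + x.1 2) * x.2 1
  have : Integrable (fun ω => ((Q t 1 ω : ℝ) + Q t 2 ω) * A 2 t ω) μ :=
    hQ.integrable_comp hA t fun x => ((x.1 1 : ℝ) + x.1 2) * x.2 2
  have : Integrable (fun ω => (Q t 1 ω : ℝ) * Q t 0 ω) μ :=
    hQ.integrable_comp hA t fun x => (x.1 1 : ℝ) * x.1 0
  have hmono : ∫ ω, (((Q (t + 1) 1 ω : ℝ) + Q (t + 1) 2 ω) ^ 2 + 2 * (Q t 1 ω + Q t 2 ω)) ∂μ ≤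
      ∫ ω, (((Q t 1 ω : ℝ) + Q t 2 ω) ^ 2 + 4 + 2 * ((Q t 1 ω + Q t 2 ω) * A 1 t ω)
        + 2 * ((Q t 1 ω + Q t 2 ω) * A 2 t ω) + 2 * (Q t 1 ω * Q t 0 ω)) ∂μ :=
    integral_mono (by fun_prop) (by fun_prop) fun ω => by
      rw [hQ.step t 1 ω, hQ.step t 2 ω]
      exact sq_tdStep_one_add_two_le (hQ.queue_zero_le_one hA.le_one t ω) (hA.le_one 1 t ω)
        (hA.le_one 2 t ω)
  rw [integral_add (by fun_prop) (by fun_prop), integral_add (by fun_prop) (by fun_prop),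
    integral_add (by fun_prop) (by fun_prop), integral_add (by fun_prop) (by fun_prop),
    integral_add (by fun_prop) (by fun_prop), integral_const_mul, integral_const_mul,
    integral_const_mul, integral_const_mul, integral_const, probReal_univ, one_smul] at hmono
  obtain ⟨h₁, h₂⟩ := hQ.measurable_tdPast hA.le_one t
  have harr₁ : ∫ ω, ((Q t 1 ω : ℝ) + Q t 2 ω) * A 1 t ω ∂μ =
      (∫ ω, ((Q t 1 ω : ℝ) + Q t 2 ω) ∂μ) * lam 1 :=
    hA.integral_mul_eq (p := (1, t)) (S := tdPast t) (by simp [tdPast]) (by fun_prop)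
  have harr₂ : ∫ ω, ((Q t 1 ω : ℝ) + Q t 2 ω) * A 2 t ω ∂μ =
      (∫ ω, ((Q t 1 ω : ℝ) + Q t 2 ω) ∂μ) * lam 2 :=
    hA.integral_mul_eq (p := (2, t)) (S := tdPast t) (by simp [tdPast]) (by fun_prop)
  linarith [hQ.integral_mul_queue_zero_le hA t]

theorem tdLyapunov_succ_add_le (hA : IsBernoulliArrivals μ lam A) (hQ : IsTopDownRun A Q)
    (hcap₁ : lam 0 + lam 1 < 1) (t : ℕ) :
    tdLyapunov μ lam Q (t + 1) +
        2 * (1 - lam 0 - lam 1) * (1 - lam 1 - lam 2) * ∫ ω, ((Q t 1 ω : ℝ) + Q t 2 ω) ∂μ ≤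
      tdLyapunov μ lam Q t + (2 + 4 * (1 - lam 0 - lam 1)) := by
  have hε : 0 ≤ 1 - lam 0 - lam 1 := by linarith
  have hblock : 0 ≤ (1 - lam 0 - lam 1) * (1 - lam 0) * ∫ ω, (Q t 1 ω : ℝ) ∂μ :=
    mul_nonneg (mul_nonneg hε (by linarith [hA.nonneg 1]))
      (integral_nonneg fun ω => Nat.cast_nonneg _)
  unfold tdLyapunov
  linarith [hQ.integral_drift_one hA t,
    mul_le_mul_of_nonneg_left (hQ.integral_drift_one_add_two hA t) hε]

theorem sum_integral_le (hA : IsBernoulliArrivals μ lam A) (hQ : IsTopDownRun A Q)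
    (hcap₁ : lam 0 + lam 1 < 1) (hcap₂ : lam 1 + lam 2 < 1) :
    ∃ C, ∀ T : ℕ, ∑ t ∈ range T, ∑ i, ∫ ω, (Q t i ω : ℝ) ∂μ ≤ C * T := by
  set c := 2 * (1 - lam 0 - lam 1) * (1 - lam 1 - lam 2)
  have hc : 0 < c := mul_pos (mul_pos two_pos (by linarith)) (by linarith)
  refine ⟨1 + (2 + 4 * (1 - lam 0 - lam 1)) / c, fun T => ?_⟩
  have hsum := sum_range_le_of_drift (hQ.tdLyapunov_succ_add_le hA hcap₁) T
  have hV₀ : tdLyapunov μ lam Q 0 = 0 := by simp [tdLyapunov, hQ.init]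
  have hVT : 0 ≤ tdLyapunov μ lam Q T :=
    add_nonneg (integral_nonneg fun ω => by positivity)
      (mul_nonneg (by linarith) (integral_nonneg fun ω => by positivity))
  have hstep : ∀ t, ∑ i, ∫ ω, (Q t i ω : ℝ) ∂μ ≤ 1 + ∫ ω, ((Q t 1 ω : ℝ) + Q t 2 ω) ∂μ := by
    intro t
    have h₀ : ∫ ω, (Q t 0 ω : ℝ) ∂μ ≤ 1 := by
      simpa using integral_mono (μ := μ) (hQ.integrable_comp hA t fun x => x.1 0)
        (integrable_const 1) fun ω => (Nat.cast_le_one.2 (hQ.queue_zero_le_one hA.le_one t ω))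
    rw [Fin.sum_univ_three, integral_add (hQ.integrable_comp hA t fun x => x.1 1)
      (hQ.integrable_comp hA t fun x => x.1 2)]
    linarith
  calc ∑ t ∈ range T, ∑ i, ∫ ω, (Q t i ω : ℝ) ∂μ
      ≤ ∑ t ∈ range T, (1 + ∫ ω, ((Q t 1 ω : ℝ) + Q t 2 ω) ∂μ) := sum_le_sum fun t _ => hstep t
    _ = T + (∑ t ∈ range T, c * ∫ ω, ((Q t 1 ω : ℝ) + Q t 2 ω) ∂μ) / c := by
      rw [sum_add_distrib, ← mul_sum, mul_div_cancel_left₀ _ hc.ne']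
      simp
    _ ≤ (1 + (2 + 4 * (1 - lam 0 - lam 1)) / c) * T := by
      rw [add_mul, one_mul, mul_comm _ (T : ℝ), ← mul_div_assoc]
      gcongr
      linarith

theorem limsup_lt_top (hA : IsBernoulliArrivals μ lam A) (hQ : IsTopDownRun A Q)
    (hcap₁ : lam 0 + lam 1 < 1) (hcap₂ : lam 1 + lam 2 < 1) :
    limsup (fun T : ℕ =>
        (∑ t ∈ range T, ∑ i, ∫⁻ ω, (Q t i ω : ℝ≥0∞) ∂μ) / (T : ℝ≥0∞)) atTop < ⊤ := by
  obtain ⟨C, hC⟩ := hQ.sum_integral_le hA hcap₁ hcap₂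
  refine limsup_div_natCast_lt_top (C := ENNReal.ofReal C) ENNReal.ofReal_ne_top fun T => ?_
  have hnonneg : ∀ t i, 0 ≤ ∫ ω, (Q t i ω : ℝ) ∂μ := fun t i =>
    integral_nonneg fun ω => Nat.cast_nonneg _
  have hlin : ∀ t i, ∫⁻ ω, (Q t i ω : ℝ≥0∞) ∂μ = ENNReal.ofReal (∫ ω, (Q t i ω : ℝ) ∂μ) :=
    fun t i => lintegral_natCast_eq_ofReal_integral (hQ.integrable_comp hA t fun x => x.1 i)
  simp_rw [hlin]
  rw [← ENNReal.ofReal_natCast, ← ENNReal.ofReal_mul' (Nat.cast_nonneg T)]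
  simp_rw [← ENNReal.ofReal_sum_of_nonneg fun i _ => hnonneg _ i]
  rw [← ENNReal.ofReal_sum_of_nonneg fun t _ => sum_nonneg fun i _ => hnonneg t i]
  exact ENNReal.ofReal_le_ofReal (hC T)

end IsTopDownRun

theorem piBU_rev (q : Fin 3 → ℕ) (i : Fin 3) :
    piBU q i.rev = piTD (fun j => q j.rev) i := by
  fin_cases i <;> simp [piBU, piTD] <;> split_ifs <;> rfl

theorem IsTopDownRun.of_piBU {Ω : Type*} {A : Fin 3 → ℕ → Ω → ℕ} {Q : ℕ → Fin 3 → Ω → ℕ}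
    (h₀ : ∀ i ω, Q 0 i ω = 0)
    (hstep : ∀ t i ω, Q (t + 1) i ω = Q t i ω - piBU (fun j => Q t j ω) i + A i t ω) :
    IsTopDownRun (fun i => A i.rev) (fun t i => Q t i.rev) where
  init i ω := h₀ i.rev ω
  step t i ω := by rw [hstep, piBU_rev]; rfl

end TopDown

theorem piTD_piBU_throughput_optimal
    {Ω : Type*} [MeasurableSpace Ω] (μ : Measure Ω) [IsProbabilityMeasure μ]
    (lam : Fin 3 → ℝ) (hlam : ∀ i, 0 ≤ lam i ∧ lam i ≤ 1)
    (hcap1 : lam 0 + lam 1 < 1) (hcap2 : lam 1 + lam 2 < 1)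
    (A : Fin 3 → ℕ → Ω → ℕ)
    (hAmeas : ∀ i t, Measurable (A i t))
    (hA01 : ∀ i t ω, A i t ω ≤ 1)
    (hArate : ∀ i t, μ {ω | A i t ω = 1} = ENNReal.ofReal (lam i))
    (hAindep : iIndepFun
      (fun p : Fin 3 × ℕ => fun ω => A p.1 p.2 ω) μ)
    (Q Q' : ℕ → Fin 3 → Ω → ℕ)
    (hQ0 : ∀ i ω, Q 0 i ω = 0) (hQ'0 : ∀ i ω, Q' 0 i ω = 0)
    (hQevol : ∀ t i ω, Q (t + 1) i ω = Q t i ω - piTD (fun j => Q t j ω) i + A i t ω)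
    (hQ'evol : ∀ t i ω, Q' (t + 1) i ω = Q' t i ω - piBU (fun j => Q' t j ω) i + A i t ω) :
    limsup (fun T : ℕ =>
        (∑ t ∈ Finset.range T, ∑ i, ∫⁻ ω, (Q t i ω : ℝ≥0∞) ∂μ) / (T : ℝ≥0∞))
      atTop < ⊤ ∧
    limsup (fun T : ℕ =>
        (∑ t ∈ Finset.range T, ∑ i, ∫⁻ ω, (Q' t i ω : ℝ≥0∞) ∂μ) / (T : ℝ≥0∞))
      atTop < ⊤ := by
  have hA : IsBernoulliArrivals μ lam A :=
    ⟨fun i => (hlam i).1, hAmeas, hA01, hArate, hAindep⟩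
  refine ⟨IsTopDownRun.limsup_lt_top hA ⟨hQ0, hQevol⟩ hcap1 hcap2, ?_⟩
  have hrev := (IsTopDownRun.of_piBU hQ'0 hQ'evol).limsup_lt_top (hA.comp Fin.rev_injective)
    (show lam 2 + lam 1 < 1 by linarith) (show lam 1 + lam 0 < 1 by linarith)
  have hsum : ∀ t, ∑ i : Fin 3, ∫⁻ ω, (Q' t i.rev ω : ℝ≥0∞) ∂μ = ∑ i, ∫⁻ ω, (Q' t i ω : ℝ≥0∞) ∂μ :=
    fun t => Equiv.sum_comp Fin.revPerm fun i => ∫⁻ ω, (Q' t i ω : ℝ≥0∞) ∂μ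
  simpa only [hsum] using hrev
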